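/- arXiv:math/0603474 — 2 statements merged into one kernel-verified Lean document; each statement's English description precedes it below -/
import Mathlib

section
/- Let H be a Hilbert space and (Σ_n) a sequence of finite signed Borel measures on H converging to a finite signed measure Σ in the sense that ∫ φ dΣ_n → ∫ φ dΣ for all bounded continuous φ, with |Σ_n|(H) → |Σ|(H) < ∞. Suppose moreover |Σ|(O) ≤ liminf_n |Σ_n|(O) for every open O (lower semicontinuity of total variation on open sets). Then for every m ≥ 1 there exists a compact set J_m ⊂ H such that |Σ_n|(H \ J_m) ≤ 1/m for all n. -/
open Filter Topology MeasureTheory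

/-- Integral of a function against a finite signed measure, via the Jordan decomposition. -/
noncomputable def signedIntegral {E : Type*} [MeasurableSpace E]
    (M : MeasureTheory.SignedMeasure E) (φ : E → ℝ) : ℝ :=
  (∫ x, φ x ∂M.toJordanDecomposition.posPart) - ∫ x, φ x ∂M.toJordanDecomposition.negPart

/-!
Cover the space by the increasing open sets `U i = B(x 0, r) ∪ ⋯ ∪ B(x i, r)` built on a dense
sequence `x`. For the limit `ν`, `ν (U i)ᶜ` is small once `i` is large; lower semicontinuity on the
open set `U i` together with `μ n univ → ν univ` transfers this to every `μ n` with `n` large, and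
the finitely many remaining `μ n` are handled one at a time. Doing this for `r = 1 / (k + 1)` with
errors `δ k` of sum less than `ε`, the intersection over `k` of the corresponding closed finite
unions of balls is closed and totally bounded, hence compact, and its complement has `μ n`-mass at
most `ε` for every `n`.
-/

open Set Metric
open scoped ENNReal

theorem ENNReal.eventually_le_add_of_le_liminf {ι : Type*} {l : Filter ι} {f : ι → ℝ≥0∞}
    {c δ : ℝ≥0∞} (hc : c ≠ ∞) (hδ : δ ≠ 0) (h : c ≤ liminf f l) : ∀ᶠ i in l, c ≤ f i + δ := by
  rcases eq_or_ne c 0 with rfl | hc₀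
  · exact Eventually.of_forall fun _ => zero_le
  filter_upwards [eventually_lt_of_lt_liminf ((ENNReal.sub_lt_self hc hc₀ hδ).trans_le h)]
    with i hi
  exact tsub_le_iff_right.1 hi.le

namespace MeasureTheory

variable {X : Type*} [MeasurableSpace X]

theorem eventually_measure_compl_le_of_iUnion_eq_univ (μ : Measure X) [IsFiniteMeasure μ]
    {U : ℕ → Set X} (hU_meas : ∀ i, MeasurableSet (U i)) (hU : Monotone U)
    (hU_univ : ⋃ i, U i = univ) {ε : ℝ≥0∞} (hε : ε ≠ 0) :
    ∀ᶠ i in atTop, μ (U i)ᶜ ≤ ε := by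
  have hlim : Tendsto (fun i => μ (U i)ᶜ) atTop (𝓝 0) := by
    have := tendsto_measure_iInter_atTop (μ := μ) (fun i => (hU_meas i).compl.nullMeasurableSet)
      (fun i j hij => compl_subset_compl.2 (hU hij)) ⟨0, measure_ne_top μ _⟩
    rwa [← compl_iUnion, hU_univ, compl_univ, measure_empty] at this
  exact (hlim.eventually_lt_const (pos_iff_ne_zero.2 hε)).mono fun _ h => h.le

variable [TopologicalSpace X] [OpensMeasurableSpace X]
  {μ : ℕ → Measure X} {ν : Measure X} [∀ n, IsFiniteMeasure (μ n)] [IsFiniteMeasure ν]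

theorem exists_eventually_measure_compl_le_of_tendsto_of_le_liminf
    (hmass : Tendsto (fun n => μ n univ) atTop (𝓝 (ν univ)))
    (hlsc : ∀ O, IsOpen O → ν O ≤ liminf (fun n => μ n O) atTop)
    {U : ℕ → Set X} (hU_open : ∀ i, IsOpen (U i)) (hU : Monotone U)
    (hU_univ : ⋃ i, U i = univ) {ε : ℝ≥0∞} (hε : ε ≠ 0) :
    ∃ i, ∀ᶠ n in atTop, μ n (U i)ᶜ ≤ ε := by
  set δ := ε / 3
  have hδ : δ ≠ 0 := ENNReal.div_ne_zero.2 ⟨hε, ENNReal.ofNat_ne_top⟩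
  obtain ⟨i, hνi⟩ := (eventually_measure_compl_le_of_iUnion_eq_univ ν
    (fun i => (hU_open i).measurableSet) hU hU_univ hδ).exists
  refine ⟨i, ?_⟩
  have hν : ν univ ≤ ν (U i) + δ := by
    rw [← measure_add_measure_compl (hU_open i).measurableSet]
    gcongr
  have hmass_le : ∀ᶠ n in atTop, μ n univ ≤ ν univ + δ :=
    (hmass.eventually_lt_const (ENNReal.lt_add_right (measure_ne_top ν _) hδ)).mono
      fun _ h => h.le
  filter_upwards [hmass_le, ENNReal.eventually_le_add_of_le_liminf (measure_ne_top ν _) hδ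
    (hlsc _ (hU_open i))] with n hn_univ hn_open
  have : μ n univ ≤ μ n (U i) + ε := calc
    μ n univ ≤ ν univ + δ := hn_univ
    _ ≤ ν (U i) + δ + δ := by gcongr
    _ ≤ μ n (U i) + δ + δ + δ := by gcongr
    _ = μ n (U i) + ε := by rw [add_assoc, add_assoc, ← add_assoc δ, ENNReal.add_thirds]
  rw [measure_compl (hU_open i).measurableSet (measure_ne_top _ _)]
  exact tsub_le_iff_left.2 this

theorem exists_forall_measure_compl_le_of_tendsto_of_le_liminf
    (hmass : Tendsto (fun n => μ n univ) atTop (𝓝 (ν univ)))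
    (hlsc : ∀ O, IsOpen O → ν O ≤ liminf (fun n => μ n O) atTop)
    {U : ℕ → Set X} (hU_open : ∀ i, IsOpen (U i)) (hU : Monotone U)
    (hU_univ : ⋃ i, U i = univ) {ε : ℝ≥0∞} (hε : ε ≠ 0) :
    ∃ i, ∀ n, μ n (U i)ᶜ ≤ ε := by
  obtain ⟨i₀, hi₀⟩ := exists_eventually_measure_compl_le_of_tendsto_of_le_liminf hmass hlsc
    hU_open hU hU_univ hε
  obtain ⟨N, hN⟩ := eventually_atTop.1 hi₀
  have hanti : ∀ n, Antitone fun i => μ n (U i)ᶜ := fun n i j hij =>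
    measure_mono (compl_subset_compl.2 (hU hij))
  have htail : ∀ᶠ i in atTop, ∀ n, N ≤ n → μ n (U i)ᶜ ≤ ε :=
    eventually_atTop.2 ⟨i₀, fun i hi n hn => (hanti n hi).trans (hN n hn)⟩
  have hhead : ∀ᶠ i in atTop, ∀ n ∈ {n | n < N}, μ n (U i)ᶜ ≤ ε :=
    (eventually_all_finite (finite_lt_nat N)).2 fun n _ =>
      eventually_measure_compl_le_of_iUnion_eq_univ (μ n) (fun i => (hU_open i).measurableSet)
        hU hU_univ hε
  obtain ⟨i, hi_tail, hi_head⟩ := (htail.and hhead).exists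
  exact ⟨i, fun n => (lt_or_ge n N).elim (hi_head n) (hi_tail n)⟩

end MeasureTheory

theorem Metric.isCompact_iInter_accumulate_closedBall {X : Type*} [PseudoMetricSpace X]
    [CompleteSpace X] (x : ℕ → X) (I : ℕ → ℕ) :
    IsCompact (⋂ k : ℕ, accumulate (fun j => closedBall (x j) (1 / (k + 1))) (I k)) := by
  refine TotallyBounded.isCompact_of_isClosed ?_
    (isClosed_iInter fun k => (finite_le_nat _).isClosed_biUnion fun _ _ => isClosed_closedBall)
  refine totallyBounded_iff.2 fun r hr => ?_
  obtain ⟨k, hk⟩ := exists_nat_one_div_lt hr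
  refine ⟨x '' {j | j ≤ I k}, (finite_le_nat _).image x, ?_⟩
  rw [biUnion_image]
  exact (iInter_subset _ k).trans
    (iUnion₂_mono fun j _ => closedBall_subset_ball hk)

namespace MeasureTheory

theorem isTightMeasureSet_range_of_forall_measure_compl_accumulate_ball_le
    {X ι : Type*} [PseudoMetricSpace X] [CompleteSpace X] [MeasurableSpace X]
    {μ : ι → Measure X} (x : ℕ → X)
    (h : ∀ (k : ℕ) (δ : ℝ≥0∞), δ ≠ 0 →
      ∃ i, ∀ n, μ n (accumulate (fun j => ball (x j) (1 / (k + 1))) i)ᶜ ≤ δ) :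
    IsTightMeasureSet (range μ) := by
  refine isTightMeasureSet_iff_exists_isCompact_measure_compl_le.2 fun ε hε => ?_
  obtain ⟨δ, hδ, hδε⟩ := ENNReal.exists_pos_sum_of_countable' hε.ne' ℕ
  choose I hI using fun k => h k (δ k) (hδ k).ne'
  refine ⟨_, isCompact_iInter_accumulate_closedBall x I, forall_mem_range.2 fun n => ?_⟩
  calc μ n (⋂ k : ℕ, accumulate (fun j => closedBall (x j) (1 / (k + 1))) (I k))ᶜ
      ≤ ∑' k : ℕ, μ n (accumulate (fun j => ball (x j) (1 / (k + 1))) (I k))ᶜ := by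
        rw [compl_iInter]
        refine (measure_iUnion_le _).trans (ENNReal.tsum_le_tsum fun k => measure_mono ?_)
        exact compl_subset_compl.2 (iUnion₂_mono fun j _ => ball_subset_closedBall)
    _ ≤ ∑' k, δ k := ENNReal.tsum_le_tsum fun k => hI k n
    _ ≤ ε := hδε.le

theorem isTightMeasureSet_range_of_tendsto_of_le_liminf
    {X : Type*} [PseudoMetricSpace X] [CompleteSpace X] [TopologicalSpace.SeparableSpace X]
    [MeasurableSpace X] [OpensMeasurableSpace X]
    {μ : ℕ → Measure X} {ν : Measure X} [∀ n, IsFiniteMeasure (μ n)] [IsFiniteMeasure ν]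
    (hmass : Tendsto (fun n => μ n univ) atTop (𝓝 (ν univ)))
    (hlsc : ∀ O, IsOpen O → ν O ≤ liminf (fun n => μ n O) atTop) :
    IsTightMeasureSet (range μ) := by
  cases isEmpty_or_nonempty X
  · exact .of_compactSpace
  set x := TopologicalSpace.denseSeq X
  refine isTightMeasureSet_range_of_forall_measure_compl_accumulate_ball_le x fun k δ hδ => ?_
  have hcover : ⋃ i, accumulate (fun j => ball (x j) (1 / (k + 1))) i = univ := by
    have := (dense_iff_iUnion_ball _).1 (TopologicalSpace.denseRange_denseSeq X) _
      (Nat.one_div_pos_of_nat (n := k))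
    rwa [biUnion_range, ← iUnion_accumulate] at this
  have hopen : ∀ i, IsOpen (accumulate (fun j => ball (x j) (1 / (k + 1))) i) := fun i =>
    isOpen_biUnion fun _ _ => isOpen_ball
  exact exists_forall_measure_compl_le_of_tendsto_of_le_liminf hmass hlsc
    hopen monotone_accumulate hcover hδ

end MeasureTheory

theorem total_variations_tight_of_weak_convergence_general
    {H : Type*} [NormedAddCommGroup H] [CompleteSpace H]
    [SecondCountableTopology H] [MeasurableSpace H] [BorelSpace H]
    (Sn : ℕ → MeasureTheory.SignedMeasure H) (S' : MeasureTheory.SignedMeasure H)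
    (hmass : Tendsto (fun n => ((Sn n).totalVariation Set.univ).toReal) atTop
      (𝓝 ((S'.totalVariation Set.univ).toReal)))
    (hlsc : ∀ O : Set H, IsOpen O →
      S'.totalVariation O ≤ liminf (fun n => (Sn n).totalVariation O) atTop) :
    ∀ m : ℕ, 1 ≤ m → ∃ J : Set H, IsCompact J ∧
      ∀ n, (Sn n).totalVariation Jᶜ ≤ 1 / (m : ENNReal) := by
  intro m _
  have htight : IsTightMeasureSet (range fun n => (Sn n).totalVariation) :=
    isTightMeasureSet_range_of_tendsto_of_le_liminf
      ((ENNReal.tendsto_toReal_iff (fun _ => measure_ne_top _ _) (measure_ne_top _ _)).1 hmass)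
      hlsc
  obtain ⟨J, hJ, hJ_compl⟩ := isTightMeasureSet_iff_exists_isCompact_measure_compl_le.1 htight _
    (ENNReal.div_pos one_ne_zero (ENNReal.natCast_ne_top m))
  exact ⟨J, hJ, fun n => hJ_compl _ ⟨n, rfl⟩⟩

/-- If signed measures `Σ_n` on a separable Hilbert space converge weakly to `Σ`, with
convergence of the total masses `|Σ_n|(H) → |Σ|(H) < ∞` and lower semicontinuity of the
total variation on open sets, then the family `(|Σ_n|)_n` is tight. -/
theorem total_variations_tight_of_weak_convergence
    {H : Type*} [NormedAddCommGroup H] [InnerProductSpace ℝ H] [CompleteSpace H]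
    [SecondCountableTopology H] [MeasurableSpace H] [BorelSpace H]
    (Sn : ℕ → MeasureTheory.SignedMeasure H) (S' : MeasureTheory.SignedMeasure H)
    (hweak : ∀ φ : H → ℝ, Continuous φ → (∃ C, ∀ x, |φ x| ≤ C) →
      Tendsto (fun n => signedIntegral (Sn n) φ) atTop (𝓝 (signedIntegral S' φ)))
    (hfin : S'.totalVariation Set.univ < ⊤)
    (hmass : Tendsto (fun n => ((Sn n).totalVariation Set.univ).toReal) atTop
      (𝓝 ((S'.totalVariation Set.univ).toReal)))
    (hlsc : ∀ O : Set H, IsOpen O →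
      S'.totalVariation O ≤ liminf (fun n => (Sn n).totalVariation O) atTop) :
    ∀ m : ℕ, 1 ≤ m → ∃ J : Set H, IsCompact J ∧
      ∀ n, (Sn n).totalVariation Jᶜ ≤ 1 / (m : ENNReal) :=
  total_variations_tight_of_weak_convergence_general Sn S' hmass hlsc
end

section
/- Let m_n (n ∈ ℕ) and m be finite positive Borel measures on (−∞, 0] with m_n((−∞,0]) = m((−∞,0]) < ∞, and suppose ∫ (λ−x)^{−ℓ} m_n(dx) → ∫ (λ−x)^{−ℓ} m(dx) for all λ > 0 and all ℓ ∈ ℕ. Then ∫ e^{tx} m_n(dx) → ∫ e^{tx} m(dx) for all t > 0. -/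
/-!
Pushing the measures forward along `x ↦ (1 - x)⁻¹`, which maps `(−∞, 0]` into `(0, 1]`, turns the
resolvent moments at `λ = 1` into the power moments `∫ y ^ k`, the total mass being the moment
`k = 0`. Under this change of variables `e^{tx}` becomes `y ↦ e^{t} e^{-t/y}`, which extends
continuously by `0` at `y = 0`. By Weierstrass it is a uniform limit of polynomials on `[0, 1]`,
and since the masses are bounded, convergence of the integrals of polynomials passes to it.
-/

open Filter Topology MeasureTheory Set

theorem tendsto_of_forall_exists_approx {ι α : Type*} [PseudoMetricSpace α] {l : Filter ι}
    {u : ι → α} {c : α}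
    (h : ∀ ε > 0, ∃ v : ι → α, ∃ d : α, Tendsto v l (𝓝 d) ∧
      (∀ᶠ i in l, dist (u i) (v i) ≤ ε) ∧ dist c d ≤ ε) :
    Tendsto u l (𝓝 c) := by
  refine Metric.tendsto_nhds.2 fun ε hε => ?_
  obtain ⟨v, d, hv, huv, hcd⟩ := h (ε / 3) (by positivity)
  filter_upwards [huv, Metric.tendsto_nhds.1 hv (ε / 3) (by positivity)] with i hui hvi
  calc dist (u i) c ≤ dist (u i) (v i) + dist (v i) d + dist d c := dist_triangle4 _ _ _ _
    _ < ε := by rw [dist_comm d c]; linarith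

section MomentConvergence

variable {μ : Measure ℝ} {a b : ℝ}

theorem integrable_of_continuousOn_of_ae_mem_Icc [IsFiniteMeasure μ]
    (hμ : ∀ᵐ y ∂μ, y ∈ Icc a b) {f : ℝ → ℝ} (hf : ContinuousOn f (Icc a b)) :
    Integrable f μ := by
  rw [← Measure.restrict_eq_self_of_ae_mem hμ]
  exact hf.integrableOn_Icc

theorem abs_integral_sub_le_of_ae_mem_Icc [IsFiniteMeasure μ] (hμ : ∀ᵐ y ∂μ, y ∈ Icc a b)
    {f g : ℝ → ℝ} (hf : ContinuousOn f (Icc a b)) (hg : ContinuousOn g (Icc a b)) {δ : ℝ}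
    (hfg : ∀ y ∈ Icc a b, |f y - g y| ≤ δ) :
    |∫ y, f y ∂μ - ∫ y, g y ∂μ| ≤ δ * μ.real univ := by
  rw [← integral_sub (integrable_of_continuousOn_of_ae_mem_Icc hμ hf)
    (integrable_of_continuousOn_of_ae_mem_Icc hμ hg)]
  exact norm_integral_le_of_norm_le_const (hμ.mono fun y hy => (Real.norm_eq_abs _).trans_le (hfg y hy))

theorem integral_polynomial_eval_of_ae_mem_Icc [IsFiniteMeasure μ]
    (hμ : ∀ᵐ y ∂μ, y ∈ Icc a b) (p : Polynomial ℝ) :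
    ∫ y, p.eval y ∂μ = ∑ i ∈ Finset.range (p.natDegree + 1), p.coeff i * ∫ y, y ^ i ∂μ := by
  simp_rw [Polynomial.eval_eq_sum_range]
  rw [integral_finsetSum _ fun i _ => (integrable_of_continuousOn_of_ae_mem_Icc hμ
    (continuous_pow i).continuousOn).const_mul _]
  simp_rw [integral_const_mul]

variable {μn : ℕ → Measure ℝ} [∀ n, IsFiniteMeasure (μn n)] [IsFiniteMeasure μ]

theorem tendsto_integral_polynomial_eval_of_tendsto_moments
    (hμn : ∀ n, ∀ᵐ y ∂μn n, y ∈ Icc a b) (hμ : ∀ᵐ y ∂μ, y ∈ Icc a b)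
    (hmom : ∀ k : ℕ, Tendsto (fun n => ∫ y, y ^ k ∂μn n) atTop (𝓝 (∫ y, y ^ k ∂μ)))
    (p : Polynomial ℝ) :
    Tendsto (fun n => ∫ y, p.eval y ∂μn n) atTop (𝓝 (∫ y, p.eval y ∂μ)) := by
  simp_rw [integral_polynomial_eval_of_ae_mem_Icc (hμn _) p,
    integral_polynomial_eval_of_ae_mem_Icc hμ p]
  exact tendsto_finsetSum _ fun i _ => (hmom i).const_mul _

theorem tendsto_integral_of_tendsto_moments
    (hμn : ∀ n, ∀ᵐ y ∂μn n, y ∈ Icc a b) (hμ : ∀ᵐ y ∂μ, y ∈ Icc a b)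
    (hmom : ∀ k : ℕ, Tendsto (fun n => ∫ y, y ^ k ∂μn n) atTop (𝓝 (∫ y, y ^ k ∂μ)))
    {f : ℝ → ℝ} (hf : ContinuousOn f (Icc a b)) :
    Tendsto (fun n => ∫ y, f y ∂μn n) atTop (𝓝 (∫ y, f y ∂μ)) := by
  set M : ℝ := μ.real univ + 1
  have hM : 0 < M := by positivity
  have hmass : ∀ᶠ n in atTop, (μn n).real univ ≤ M :=
    (by simpa using hmom 0 : Tendsto (fun n => (μn n).real univ) atTop (𝓝 (μ.real univ))
      ).eventually_le_const (lt_add_one _)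
  refine tendsto_of_forall_exists_approx fun ε hε => ?_
  obtain ⟨p, hp⟩ := exists_polynomial_near_of_continuousOn a b f hf (ε / M) (by positivity)
  have hfp : ∀ y ∈ Icc a b, |f y - p.eval y| ≤ ε / M := fun y hy => by
    rw [abs_sub_comm]; exact (hp y hy).le
  have hbound : ∀ ν : Measure ℝ, [IsFiniteMeasure ν] → (∀ᵐ y ∂ν, y ∈ Icc a b) →
      ν.real univ ≤ M → dist (∫ y, f y ∂ν) (∫ y, p.eval y ∂ν) ≤ ε := fun ν _ hν hνM =>
    calc dist (∫ y, f y ∂ν) (∫ y, p.eval y ∂ν) ≤ ε / M * ν.real univ :=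
          abs_integral_sub_le_of_ae_mem_Icc hν hf (Polynomial.continuousOn _) hfp
      _ ≤ ε / M * M := by gcongr
      _ = ε := div_mul_cancel₀ ε hM.ne'
  refine ⟨_, _, tendsto_integral_polynomial_eval_of_tendsto_moments hμn hμ hmom p, ?_,
    hbound μ hμ (lt_add_one _).le⟩
  filter_upwards [hmass] with n hn using hbound (μn n) (hμn n) hn

end MomentConvergence

theorem ae_mem_Icc_map_inv_one_sub {μ : Measure ℝ} (hμ : ∀ᵐ x ∂μ, x ≤ 0) :
    ∀ᵐ y ∂μ.map (fun x : ℝ => (1 - x)⁻¹), y ∈ Icc 0 1 := by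
  refine (ae_map_iff (by fun_prop) measurableSet_Icc).2 (hμ.mono fun x hx => ?_)
  exact ⟨by simp only [inv_nonneg]; linarith, inv_le_one_of_one_le₀ (by linarith)⟩

theorem exp_mul_eq_exp_mul_expNegInvGlue {t x : ℝ} (ht : 0 < t) (hx : x ≤ 0) :
    Real.exp (t * x) = Real.exp t * expNegInvGlue ((1 - x)⁻¹ / t) := by
  have hpos : 0 < (1 - x)⁻¹ / t := by
    have : 0 < 1 - x := by linarith
    positivity
  rw [expNegInvGlue, if_neg hpos.not_ge, inv_div, div_inv_eq_mul, ← Real.exp_add]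
  congr 1
  field_simp
  ring

/-- If finite positive measures `m_n` on `(−∞,0]` have the same total mass as `m` and the
moments `∫ (λ−x)^{−ℓ} dm_n` converge to those of `m` for all `λ > 0`, `ℓ ≥ 1`, then the
Laplace-type integrals converge: `∫ e^{tx} dm_n → ∫ e^{tx} dm` for all `t > 0`. -/
theorem laplace_convergence_of_resolvent_moments
    (mn : ℕ → Measure ℝ) (m : Measure ℝ)
    (hsupp_n : ∀ n, mn n (Set.Ioi (0 : ℝ)) = 0)
    (hsupp : m (Set.Ioi (0 : ℝ)) = 0)
    (hfin : m Set.univ < ⊤)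
    (hmass : ∀ n, mn n Set.univ = m Set.univ)
    (hmom : ∀ lam : ℝ, 0 < lam → ∀ l : ℕ, 1 ≤ l →
      Tendsto (fun n => ∫ x, ((lam - x)⁻¹) ^ l ∂(mn n)) atTop
        (𝓝 (∫ x, ((lam - x)⁻¹) ^ l ∂m))) :
    ∀ t : ℝ, 0 < t →
      Tendsto (fun n => ∫ x, Real.exp (t * x) ∂(mn n)) atTop
        (𝓝 (∫ x, Real.exp (t * x) ∂m)) := by
  intro t ht
  have : IsFiniteMeasure m := ⟨hfin⟩
  have (n : ℕ) : IsFiniteMeasure (mn n) := ⟨hmass n ▸ hfin⟩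
  set φ : ℝ → ℝ := fun x => (1 - x)⁻¹
  have hφ : Measurable φ := by fun_prop
  have hnonpos {μ : Measure ℝ} (h : μ (Ioi 0) = 0) : ∀ᵐ x ∂μ, x ≤ 0 := by
    simpa using measure_eq_zero_iff_ae_notMem.1 h
  have hpow (μ : Measure ℝ) (k : ℕ) : ∫ y, y ^ k ∂μ.map φ = ∫ x, φ x ^ k ∂μ :=
    integral_map hφ.aemeasurable (by fun_prop)
  have hmom_map (k : ℕ) :
      Tendsto (fun n => ∫ y, y ^ k ∂(mn n).map φ) atTop (𝓝 (∫ y, y ^ k ∂m.map φ)) := by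
    simp_rw [hpow]
    rcases k.eq_zero_or_pos with rfl | hk
    · simp [Measure.real, hmass]
    · exact hmom 1 one_pos k hk
  have hexp (μ : Measure ℝ) (h : μ (Ioi 0) = 0) :
      ∫ x, Real.exp (t * x) ∂μ = ∫ y, Real.exp t * expNegInvGlue (y / t) ∂μ.map φ := by
    rw [integral_map hφ.aemeasurable (by fun_prop)]
    exact integral_congr_ae ((hnonpos h).mono fun x hx => exp_mul_eq_exp_mul_expNegInvGlue ht hx)
  simp_rw [hexp _ (hsupp_n _), hexp m hsupp]
  exact tendsto_integral_of_tendsto_moments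
    (fun n => ae_mem_Icc_map_inv_one_sub (hnonpos (hsupp_n n)))
    (ae_mem_Icc_map_inv_one_sub (hnonpos hsupp)) hmom_map
    (by fun_prop (disch := exact expNegInvGlue.contDiff.continuous) : Continuous _).continuousOn
end
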